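/- For 1 ≤ k and 1 ≤ h, with c_i^{(k)}(q) = (-1)^{k-i} q^{binom(k-i,2)} / ((q;q)_{k-i}(q;q)_{i-1}): ∑_{i=1}^{k} c_i^{(k)}(q) ∏_{j=1}^{h-1} (1 - q^{i+j}) = (q^{k(k-1)}/(q;q)_k) · [h-1 choose k-1]_q · (q;q)_h. -/

import Mathlib

open Finset

/-- q-Pochhammer symbol: (x;q)_m = ∏_{j=0}^{m-1} (1 - x q^j). -/
noncomputable def qPoch {F : Type*} [Field F] (x q : F) (m : ℕ) : F :=
  ∏ j ∈ Finset.range m, (1 - x * q ^ j)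

/-- (q;q)_m = ∏_{j=1}^{m} (1 - q^j). -/
noncomputable def qFac {F : Type*} [Field F] (q : F) (m : ℕ) : F := qPoch q q m

/-- Gaussian binomial coefficient, equal to 0 when a > n. -/
noncomputable def qBinom {F : Type*} [Field F] (q : F) (n a : ℕ) : F :=
  if a ≤ n then qFac q n / (qFac q a * qFac q (n - a)) else 0

/-- c_i^{(k)}(q) = (-1)^{k-i} q^{binom(k-i,2)} / ((q;q)_{k-i} (q;q)_{i-1}). -/
noncomputable def cCoef {F : Type*} [Field F] (q : F) (k i : ℕ) : F :=
  (-1 : F) ^ (k - i) * q ^ ((k - i).choose 2) / (qFac q (k - i) * qFac q (i - 1))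

/-!
Write `k = K + 1`, `h = H + 1`. After the substitution `i = k - j`, the coefficient of the
`j`-th term is `[K, j] q^(j choose 2) (-1)^j / (q;q)_K`, and the product is `(q^(K-j+2); q)_H`.
Both are instances of the q-binomial theorem
`∏_{r<n} (x + q^r y) = ∑_j [n, j] q^(j choose 2) x^(n-j) y^j`.
Expanding the product and exchanging the sums, the sum over `j` collapses to
`∏_{r<K} (q^m - q^r) = (-1)^K q^(K choose 2) (q;q)_K [m, K]`, which kills every `m < K`.
What is left, `∑_m [H, m] [m, K] q^(m choose 2) (-q^2)^m`, becomes a single product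
`[H, K] q^(K choose 2) (-q^2)^K (q^(K+2); q)_(H-K)` by `[H, m] [m, K] = [H, K] [H-K, m-K]` and a
third use of the q-binomial theorem.
-/

theorem Nat.add_choose_two (a b : ℕ) : (a + b).choose 2 = a.choose 2 + b.choose 2 + a * b := by
  induction b with
  | zero => simp
  | succ b ih =>
    rw [← add_assoc, Nat.choose_succ_succ, Nat.choose_succ_succ b, ih, Nat.choose_one_right,
      Nat.choose_one_right]
    ring

theorem sum_Icc_one_eq_sum_range_reflect {M : Type*} [AddCommMonoid M] (f : ℕ → M) (n : ℕ) :
    ∑ i ∈ Icc 1 n, f i = ∑ j ∈ range n, f (n - j) := by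
  refine sum_nbij' (n - ·) (n - ·) ?_ ?_ ?_ ?_ ?_
  all_goals intro a ha; simp only [mem_Icc, mem_range] at ha ⊢
  any_goals omega
  rw [Nat.sub_sub_self ha.2]

section

variable {F : Type*} [Field F] {q : F}

theorem qFac_eq_prod (q : F) (n : ℕ) : qFac q n = ∏ j ∈ range n, (1 - q ^ (j + 1)) := by
  simp only [qFac, qPoch, pow_succ']

@[simp]
theorem qFac_zero (q : F) : qFac q 0 = 1 := by
  simp [qFac_eq_prod]

theorem qFac_succ (q : F) (n : ℕ) : qFac q (n + 1) = qFac q n * (1 - q ^ (n + 1)) := by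
  simp only [qFac_eq_prod, prod_range_succ]

theorem qFac_add (q : F) (m n : ℕ) :
    qFac q (m + n) = qFac q m * ∏ j ∈ range n, (1 - q ^ (m + j + 1)) := by
  simp only [qFac_eq_prod, prod_range_add, add_assoc]

theorem one_sub_pow_succ_ne_zero (hq : ¬IsOfFinOrder q) (n : ℕ) : 1 - q ^ (n + 1) ≠ 0 :=
  fun h ↦ hq (isOfFinOrder_iff_pow_eq_one.mpr ⟨n + 1, n.succ_pos, (sub_eq_zero.mp h).symm⟩)

theorem qFac_ne_zero (hq : ¬IsOfFinOrder q) (n : ℕ) : qFac q n ≠ 0 := by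
  rw [qFac_eq_prod, prod_ne_zero_iff]
  exact fun j _ ↦ one_sub_pow_succ_ne_zero hq j

theorem qBinom_of_le {n k : ℕ} (h : k ≤ n) :
    qBinom q n k = qFac q n / (qFac q k * qFac q (n - k)) :=
  if_pos h

theorem qBinom_of_lt {n k : ℕ} (h : n < k) : qBinom q n k = 0 :=
  if_neg h.not_ge

theorem qBinom_zero_right (hq : ¬IsOfFinOrder q) (n : ℕ) : qBinom q n 0 = 1 := by
  rw [qBinom_of_le n.zero_le, qFac_zero, one_mul, Nat.sub_zero, div_self (qFac_ne_zero hq n)]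

theorem qBinom_self (hq : ¬IsOfFinOrder q) (n : ℕ) : qBinom q n n = 1 := by
  rw [qBinom_of_le le_rfl, Nat.sub_self, qFac_zero, mul_one, div_self (qFac_ne_zero hq n)]

theorem qBinom_succ_succ (hq : ¬IsOfFinOrder q) (n k : ℕ) :
    qBinom q (n + 1) (k + 1) = qBinom q n k + q ^ (k + 1) * qBinom q n (k + 1) := by
  rcases lt_trichotomy k n with hkn | rfl | hnk
  · obtain ⟨d, rfl⟩ := Nat.exists_eq_add_of_lt hkn
    rw [qBinom_of_le (by omega), qBinom_of_le (by omega), qBinom_of_le (by omega),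
      show k + d + 1 + 1 - (k + 1) = d + 1 by omega, show k + d + 1 - k = d + 1 by omega,
      show k + d + 1 - (k + 1) = d by omega, qFac_succ q (k + d + 1), qFac_succ q k, qFac_succ q d]
    have := one_sub_pow_succ_ne_zero hq k
    have := one_sub_pow_succ_ne_zero hq d
    have := qFac_ne_zero hq k
    have := qFac_ne_zero hq d
    field_simp
    ring
  · rw [qBinom_self hq, qBinom_self hq, qBinom_of_lt k.lt_succ_self, mul_zero, add_zero]
  · rw [qBinom_of_lt (by omega), qBinom_of_lt hnk, qBinom_of_lt (by omega)]
    ring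

theorem prod_range_add_pow_mul_eq_sum (hq : ¬IsOfFinOrder q) (x y : F) (n : ℕ) :
    ∏ r ∈ range n, (x + q ^ r * y) =
      ∑ j ∈ range (n + 1), qBinom q n j * q ^ j.choose 2 * x ^ (n - j) * y ^ j := by
  induction n generalizing y with
  | zero => simp [qBinom_zero_right hq]
  | succ n ih =>
    have hshift : ∏ r ∈ range (n + 1), (x + q ^ r * y) =
        (x + y) * ∏ r ∈ range n, (x + q ^ r * (q * y)) := by
      rw [prod_range_succ', pow_zero, one_mul, mul_comm]
      exact congrArg _ (prod_congr rfl fun r _ ↦ by ring)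
    have hy : y * ∑ j ∈ range (n + 1), qBinom q n j * q ^ j.choose 2 * x ^ (n - j) * (q * y) ^ j =
        ∑ j ∈ range (n + 1), qBinom q n j * q ^ (j + 1).choose 2 * x ^ (n - j) * y ^ (j + 1) := by
      rw [mul_sum]
      refine sum_congr rfl fun j _ ↦ ?_
      rw [Nat.choose_succ_succ, Nat.choose_one_right, pow_add]
      ring
    have hx : x * ∑ j ∈ range (n + 1), qBinom q n j * q ^ j.choose 2 * x ^ (n - j) * (q * y) ^ j =
        x ^ (n + 1) + ∑ j ∈ range (n + 1),
          q ^ (j + 1) * qBinom q n (j + 1) * q ^ (j + 1).choose 2 * x ^ (n - j) * y ^ (j + 1) := by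
      conv_rhs => rw [sum_range_succ, qBinom_of_lt n.lt_succ_self]
      rw [sum_range_succ', mul_add, mul_sum, add_comm]
      simp only [qBinom_zero_right hq, Nat.choose_zero_succ, pow_zero, Nat.sub_zero, mul_one,
        mul_zero, zero_mul, add_zero]
      congr 1
      · ring
      refine sum_congr rfl fun j hj ↦ ?_
      rw [show n - j = n - (j + 1) + 1 by have := mem_range.mp hj; omega]
      ring
    rw [hshift, ih, add_mul, hx, hy, sum_range_succ' _ (n + 1)]
    simp only [qBinom_succ_succ hq, add_mul, sum_add_distrib, qBinom_zero_right hq,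
      Nat.choose_zero_succ, pow_zero, Nat.sub_zero, mul_one, one_mul, Nat.add_sub_add_right]
    ring

theorem prod_range_one_add_pow_mul_eq_sum (hq : ¬IsOfFinOrder q) (y : F) (n : ℕ) :
    ∏ r ∈ range n, (1 + q ^ r * y) =
      ∑ j ∈ range (n + 1), qBinom q n j * q ^ j.choose 2 * y ^ j := by
  simp [prod_range_add_pow_mul_eq_sum hq]

theorem qBinom_mul (hq : ¬IsOfFinOrder q) {n k s : ℕ} (hkn : k ≤ n) (hsk : s ≤ k) :
    qBinom q n k * qBinom q k s = qBinom q n s * qBinom q (n - s) (k - s) := by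
  rw [qBinom_of_le hkn, qBinom_of_le hsk, qBinom_of_le (hsk.trans hkn), qBinom_of_le (by omega),
    show n - s - (k - s) = n - k by omega]
  have := qFac_ne_zero hq k
  have := qFac_ne_zero hq (n - s)
  field_simp

theorem pow_mul_one_sub_pow_mul_qBinom_succ (hq : ¬IsOfFinOrder q) (n k : ℕ) :
    q ^ k * (1 - q ^ (k + 1)) * qBinom q n (k + 1) = (q ^ k - q ^ n) * qBinom q n k := by
  rcases lt_trichotomy k n with hkn | rfl | hnk
  · obtain ⟨d, rfl⟩ := Nat.exists_eq_add_of_lt hkn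
    have := qFac_ne_zero hq k
    have := qFac_ne_zero hq d
    have := one_sub_pow_succ_ne_zero hq k
    have := one_sub_pow_succ_ne_zero hq d
    rw [qBinom_of_le (by omega), qBinom_of_le (by omega), show k + d + 1 - (k + 1) = d by omega,
      show k + d + 1 - k = d + 1 by omega, qFac_succ q k, qFac_succ q d]
    field_simp
    ring
  · rw [qBinom_of_lt k.lt_succ_self, sub_self]
    ring
  · rw [qBinom_of_lt hnk, qBinom_of_lt (by omega)]
    ring

theorem prod_range_pow_sub_pow (hq : ¬IsOfFinOrder q) (m K : ℕ) :
    ∏ r ∈ range K, (q ^ m - q ^ r) = (-1) ^ K * q ^ K.choose 2 * qFac q K * qBinom q m K := by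
  induction K with
  | zero => simp [qBinom_zero_right hq]
  | succ K ih =>
    rw [prod_range_succ, ih, qFac_succ, Nat.choose_succ_succ, Nat.choose_one_right]
    linear_combination ((-1) ^ K * q ^ K.choose 2 * qFac q K) *
      pow_mul_one_sub_pow_mul_qBinom_succ hq m K

theorem sum_qBinom_mul_qBinom (hq : ¬IsOfFinOrder q) (n k : ℕ) (y : F) :
    ∑ m ∈ range (n + 1), qBinom q n m * qBinom q m k * q ^ m.choose 2 * y ^ m =
      qBinom q n k * q ^ k.choose 2 * y ^ k * ∏ r ∈ range (n - k), (1 + q ^ r * (q ^ k * y)) := by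
  rcases le_or_gt k n with hkn | hnk
  · obtain ⟨l, rfl⟩ := Nat.exists_eq_add_of_le hkn
    rw [add_assoc, sum_range_add, Nat.add_sub_cancel_left, prod_range_one_add_pow_mul_eq_sum hq,
      mul_sum]
    have hlow : ∀ m ∈ range k, qBinom q (k + l) m * qBinom q m k * q ^ m.choose 2 * y ^ m = 0 :=
      fun m hm ↦ by rw [qBinom_of_lt (mem_range.mp hm), mul_zero, zero_mul, zero_mul]
    rw [sum_eq_zero hlow, zero_add]
    refine sum_congr rfl fun s hs ↦ ?_
    rw [qBinom_mul hq (by have := mem_range.mp hs; omega) (by omega), Nat.add_sub_cancel_left,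
      Nat.add_sub_cancel_left, Nat.add_choose_two, pow_add, pow_add, pow_add, pow_mul]
    ring
  · have hzero : ∀ m ∈ range (n + 1), qBinom q n m * qBinom q m k * q ^ m.choose 2 * y ^ m = 0 :=
      fun m hm ↦ by
        rw [qBinom_of_lt (by have := mem_range.mp hm; omega : m < k), mul_zero, zero_mul, zero_mul]
    rw [sum_eq_zero hzero, qBinom_of_lt hnk]
    ring

theorem cCoef_succ_sub (hq : ¬IsOfFinOrder q) {K j : ℕ} (hj : j ≤ K) :
    cCoef q (K + 1) (K + 1 - j) = qBinom q K j * q ^ j.choose 2 * (-1) ^ j / qFac q K := by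
  rw [cCoef, qBinom_of_le hj, show K + 1 - (K + 1 - j) = j by omega,
    show K + 1 - j - 1 = K - j by omega]
  have := qFac_ne_zero hq K
  field_simp

theorem prod_Icc_one_sub_pow (q : F) (i n : ℕ) :
    ∏ l ∈ Icc 1 n, (1 - q ^ (i + l)) = ∏ r ∈ range n, (1 + q ^ r * -q ^ (i + 1)) := by
  rw [← Ico_add_one_right_eq_Icc, prod_Ico_eq_prod_range, Nat.add_sub_cancel]
  refine prod_congr rfl fun r _ ↦ ?_
  ring

theorem sum_cCoef_mul_prod_one_sub_pow_eq_sum (hq : ¬IsOfFinOrder q) (K H : ℕ) :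
    ∑ i ∈ Icc 1 (K + 1), cCoef q (K + 1) i * ∏ l ∈ Icc 1 H, (1 - q ^ (i + l)) =
      (-1) ^ K * q ^ K.choose 2 *
        ∑ m ∈ range (H + 1), qBinom q H m * qBinom q m K * q ^ m.choose 2 * (-q ^ 2) ^ m := by
  have hterm : ∀ j ∈ range (K + 1),
      cCoef q (K + 1) (K + 1 - j) * ∏ l ∈ Icc 1 H, (1 - q ^ (K + 1 - j + l)) =
        (qFac q K)⁻¹ * ∑ m ∈ range (H + 1), qBinom q H m * q ^ m.choose 2 * (-q ^ 2) ^ m *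
          (qBinom q K j * q ^ j.choose 2 * (q ^ m) ^ (K - j) * (-1) ^ j) := by
    intro j hj
    rw [cCoef_succ_sub hq (Nat.lt_succ_iff.mp (mem_range.mp hj)), prod_Icc_one_sub_pow,
      prod_range_one_add_pow_mul_eq_sum hq, mul_sum, mul_sum]
    refine sum_congr rfl fun m _ ↦ ?_
    rw [show K + 1 - j + 1 = K - j + 2 by have := mem_range.mp hj; omega]
    ring
  have hinner (m : ℕ) :
      ∑ j ∈ range (K + 1), qBinom q K j * q ^ j.choose 2 * (q ^ m) ^ (K - j) * (-1) ^ j =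
        (-1) ^ K * q ^ K.choose 2 * qFac q K * qBinom q m K := by
    rw [← prod_range_add_pow_mul_eq_sum hq, ← prod_range_pow_sub_pow hq]
    exact prod_congr rfl fun r _ ↦ by ring
  rw [sum_Icc_one_eq_sum_range_reflect, sum_congr rfl hterm, ← mul_sum, sum_comm]
  simp only [← mul_sum, hinner]
  rw [mul_sum, mul_sum]
  refine sum_congr rfl fun m _ ↦ ?_
  have := qFac_ne_zero hq K
  field_simp

theorem sum_cCoef_mul_prod_one_sub_pow (hq : ¬IsOfFinOrder q) (K H : ℕ) :
    ∑ i ∈ Icc 1 (K + 1), cCoef q (K + 1) i * ∏ l ∈ Icc 1 H, (1 - q ^ (i + l)) =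
      q ^ ((K + 1) * K) / qFac q (K + 1) * qBinom q H K * qFac q (H + 1) := by
  rw [sum_cCoef_mul_prod_one_sub_pow_eq_sum hq, sum_qBinom_mul_qBinom hq]
  rcases le_or_gt K H with hKH | hHK
  · obtain ⟨L, rfl⟩ := Nat.exists_eq_add_of_le hKH
    have hprod : ∏ r ∈ range (K + L - K), (1 + q ^ r * (q ^ K * -q ^ 2)) =
        qFac q (K + L + 1) / qFac q (K + 1) := by
      rw [Nat.add_sub_cancel_left, add_right_comm, qFac_add,
        mul_div_cancel_left₀ _ (qFac_ne_zero hq _)]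
      exact prod_congr rfl fun r _ ↦ by ring
    have hexp : (K + 1) * K = 2 * K.choose 2 + 2 * K := by
      have := Nat.add_one_mul_choose_eq K 1
      rw [Nat.choose_one_right, Nat.choose_succ_succ, Nat.choose_one_right] at this
      linarith
    have hsign : (-1 : F) ^ K * (-q ^ 2) ^ K = (q ^ 2) ^ K := by
      rw [← mul_pow, neg_one_mul, neg_neg]
    rw [hprod, hexp, pow_add, pow_mul, pow_mul, ← hsign]
    have := qFac_ne_zero hq (K + 1)
    field_simp
    ring
  · rw [qBinom_of_lt hHK]
    ring

end

theorem RatFunc.not_isOfFinOrder_X {K : Type*} [Field K] :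
    ¬IsOfFinOrder (RatFunc.X : RatFunc K) := by
  rw [isOfFinOrder_iff_pow_eq_one]
  rintro ⟨n, hn, h⟩
  rw [← RatFunc.algebraMap_X, ← map_pow, ← map_one (algebraMap (Polynomial K) (RatFunc K)),
    (RatFunc.algebraMap_injective K).eq_iff] at h
  simpa [hn.ne'] using congrArg Polynomial.natDegree h

/-- For 1 ≤ k, 1 ≤ h:
∑_{i=1}^{k} c_i^{(k)}(q) ∏_{j=1}^{h-1}(1 - q^{i+j})
  = (q^{k(k-1)}/(q;q)_k)·[h-1 choose k-1]_q·(q;q)_h, in ℚ(q). -/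
theorem cCoef_evaluation (k h : ℕ) (hk : 1 ≤ k) (hh : 1 ≤ h) :
    ∑ i ∈ Finset.Icc 1 k,
        cCoef (RatFunc.X : RatFunc ℚ) k i *
          ∏ j ∈ Finset.Icc 1 (h - 1), (1 - (RatFunc.X : RatFunc ℚ) ^ (i + j)) =
      (RatFunc.X : RatFunc ℚ) ^ (k * (k - 1)) / qFac (RatFunc.X : RatFunc ℚ) k *
        qBinom (RatFunc.X : RatFunc ℚ) (h - 1) (k - 1) * qFac (RatFunc.X : RatFunc ℚ) h := by
  obtain ⟨K, rfl⟩ := Nat.exists_eq_add_of_le' hk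
  obtain ⟨H, rfl⟩ := Nat.exists_eq_add_of_le' hh
  exact sum_cCoef_mul_prod_one_sub_pow RatFunc.not_isOfFinOrder_X K H
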